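/- Let A ∈ ℝ^{n×n}, B ∈ ℝ^{n×m}, N ≥ 1, an initial state x̂ ∈ ℝⁿ, and reference points x̄_0, …, x̄_N ∈ ℝⁿ and ū_0, …, ū_{N−1} ∈ ℝᵐ. Define backwards P_N = I and, for t = N−1, …, 0: R̃_t = I + Bᵀ P_{t+1} B, K_t = −R̃_t⁻¹ Bᵀ P_{t+1} A, Ā_t = A + B K_t, P_t = I + K_tᵀ K_t + Ā_tᵀ P_{t+1} Ā_t; also q_N = −x̄_N and, for t = N−1, …, 0: d_t = R̃_t⁻¹(ū_t − Bᵀ q_{t+1}), q_t = K_tᵀ(d_t − ū_t) − x̄_t + Ā_tᵀ(P_{t+1} B d_t + q_{t+1}). Define the forward pass x_0 = x̂, u_t = K_t x_t + d_t, x_{t+1} = A x_t + B u_t for t = 0, …, N−1. Then (x_0, …, x_N, u_0, …, u_{N−1}) is the unique minimizer of Σ_{t=0}^{N−1} (1/2)(‖x'_t − x̄_t‖² + ‖u'_t − ū_t‖²) + (1/2)‖x'_N − x̄_N‖² over all sequences (x'_t)_{t=0}^{N}, (u'_t)_{t=0}^{N−1} satisfying x'_0 = x̂ and x'_{t+1}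 = A x'_t + B u'_t for all t = 0, …, N−1. -/

import Mathlib

/-! The cost-to-go `V_t z = ½ ⟪z, P_t z⟫ + ⟪q_t, z⟫` satisfies, for every state `z` and input `w`,
the completed-square identity
`½‖z - x̄_t‖² + ½‖w - ū_t‖² + V_{t+1} (A z + B w) = V_t z + c_t + ½ ⟪e, R̃_t e⟫`
with `e = w - (K_t z + d_t)` and a constant `c_t`: the gain and feedforward equations make
`K_t z + d_t` the stationary point in `w` of the left-hand side, and the recursions for `P_t` and
`q_t` are exactly what remains at that point. Along a feasible trajectory the cost therefore
telescopes to a constant plus `∑ ½ ⟪e_t, R̃_t e_t⟫`. Since every `P_t` is positive semidefinite,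
`R̃_t ⪰ 1`, so this sum is nonnegative and vanishes exactly when `u'_t = K_t x'_t + d_t` for all
`t`, which together with the dynamics forces the forward-pass trajectory. -/

open Matrix

/-- The total squared-distance cost of a candidate trajectory
`(x'_0, …, x'_N, u'_0, …, u'_{N−1})` to the reference `(x̄, ū)`. -/
noncomputable def lqrCost {n m : ℕ} (N : ℕ)
    (xbar : ℕ → EuclideanSpace ℝ (Fin n)) (ubar : ℕ → EuclideanSpace ℝ (Fin m))
    (x' : ℕ → EuclideanSpace ℝ (Fin n)) (u' : ℕ → EuclideanSpace ℝ (Fin m)) : ℝ :=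
  (∑ t ∈ Finset.range N,
      (1 / 2 * ‖x' t - xbar t‖ ^ 2 + 1 / 2 * ‖u' t - ubar t‖ ^ 2)) +
    1 / 2 * ‖x' N - xbar N‖ ^ 2

/-- Feasibility: the trajectory starts at `x̂` and follows the linear dynamics
`x'_{t+1} = A x'_t + B u'_t` for `t = 0, …, N−1`. -/
def lqrFeasible {n m : ℕ} (N : ℕ)
    (A : Matrix (Fin n) (Fin n) ℝ) (B : Matrix (Fin n) (Fin m) ℝ)
    (xhat : EuclideanSpace ℝ (Fin n))
    (x' : ℕ → EuclideanSpace ℝ (Fin n)) (u' : ℕ → EuclideanSpace ℝ (Fin m)) : Prop :=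
  x' 0 = xhat ∧
    ∀ t < N, x' (t + 1) = toEuclideanLin A (x' t) + toEuclideanLin B (u' t)

open RealInnerProductSpace Finset

noncomputable section CompletionOfSquares

variable {E F : Type*} [NormedAddCommGroup E] [InnerProductSpace ℝ E]
  [NormedAddCommGroup F] [InnerProductSpace ℝ F]

def costToGo (p : E →ₗ[ℝ] E) (q y : E) : ℝ := 1 / 2 * ⟪y, p y⟫ + ⟪q, y⟫

def controlDeviationCost (p : E →ₗ[ℝ] E) (b : F →ₗ[ℝ] E) (e : F) : ℝ :=
  1 / 2 * ‖e‖ ^ 2 + 1 / 2 * ⟪b e, p (b e)⟫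

lemma costToGo_add {p : E →ₗ[ℝ] E} (hp : p.IsSymmetric) (q y h : E) :
    costToGo p q (y + h) = costToGo p q y + ⟪h, p y + q⟫ + 1 / 2 * ⟪h, p h⟫ := by
  have hsymm : ⟪y, p h⟫ = ⟪h, p y⟫ := by rw [← hp, real_inner_comm]
  simp only [costToGo, map_add, inner_add_left, inner_add_right, real_inner_comm h q]
  linarith

lemma half_norm_sub_sq_eq_costToGo (z xb : E) :
    1 / 2 * ‖z - xb‖ ^ 2 = costToGo 1 (-xb) z + 1 / 2 * ‖xb‖ ^ 2 := by
  simp only [costToGo, Module.End.one_apply, inner_neg_left, real_inner_self_eq_norm_sq,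
    norm_sub_sq_real, real_inner_comm z xb]
  ring

lemma controlDeviationCost_nonneg {p : E →ₗ[ℝ] E} (hp : p.IsPositive) (b : F →ₗ[ℝ] E) (e : F) :
    0 ≤ controlDeviationCost p b e := by
  have hpe := hp.inner_nonneg_right (b e)
  unfold controlDeviationCost
  positivity

lemma controlDeviationCost_eq_zero_iff {p : E →ₗ[ℝ] E} (hp : p.IsPositive) (b : F →ₗ[ℝ] E)
    (e : F) : controlDeviationCost p b e = 0 ↔ e = 0 := by
  refine ⟨fun h => ?_, fun h => by simp [controlDeviationCost, h]⟩
  have hpe := hp.inner_nonneg_right (b e)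
  have he : ‖e‖ ^ 2 = 0 := by
    rw [controlDeviationCost] at h
    linarith [sq_nonneg ‖e‖]
  simpa using he

/-- A quadratic function equals its second-order Taylor expansion, whose first-order term
vanishes at the stationary point `w₀`. -/
lemma half_norm_sq_add_costToGo_of_stationary {p : E →ₗ[ℝ] E} (hp : p.IsSymmetric)
    (b : F →ₗ[ℝ] E) (q c : E) {ub w₀ : F}
    (hstat : ∀ v, ⟪v, w₀ - ub⟫ + ⟪b v, p (c + b w₀) + q⟫ = 0) (w : F) :
    1 / 2 * ‖w - ub‖ ^ 2 + costToGo p q (c + b w)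
      = 1 / 2 * ‖w₀ - ub‖ ^ 2 + costToGo p q (c + b w₀)
        + controlDeviationCost p b (w - w₀) := by
  obtain ⟨e, rfl⟩ : ∃ e, w = w₀ + e := ⟨w - w₀, by abel⟩
  rw [map_add, ← add_assoc, costToGo_add hp, show w₀ + e - ub = (w₀ - ub) + e by abel,
    norm_add_sq_real, add_sub_cancel_left, controlDeviationCost]
  linarith [hstat e, real_inner_comm e (w₀ - ub)]

variable [FiniteDimensional ℝ E] [FiniteDimensional ℝ F]

lemma costToGo_closedLoop {a p : E →ₗ[ℝ] E} (hp : p.IsSymmetric) (b : F →ₗ[ℝ] E)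
    (k : E →ₗ[ℝ] F) (q xb : E) (ub d : F) (z : E) :
    1 / 2 * ‖z - xb‖ ^ 2 + 1 / 2 * ‖k z + d - ub‖ ^ 2 + costToGo p q (a z + b (k z + d))
      = costToGo (1 + k.adjoint ∘ₗ k + (a + b ∘ₗ k).adjoint ∘ₗ p ∘ₗ (a + b ∘ₗ k))
          (k.adjoint (d - ub) - xb + (a + b ∘ₗ k).adjoint (p (b d) + q)) z
        + (1 / 2 * ‖xb‖ ^ 2 + 1 / 2 * ‖d - ub‖ ^ 2 + costToGo p q (b d)) := by
  set f := a + b ∘ₗ k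
  have hf : a z + b (k z + d) = b d + f z := by simp [f]; abel
  rw [hf, costToGo_add hp, show k z + d - ub = k z + (d - ub) by abel, norm_add_sq_real,
    norm_sub_sq_real]
  simp only [costToGo, LinearMap.add_apply, LinearMap.comp_apply, Module.End.one_apply,
    inner_add_left, inner_add_right, inner_sub_left, LinearMap.adjoint_inner_left,
    LinearMap.adjoint_inner_right, real_inner_self_eq_norm_sq, inner_sub_right]
  linarith [real_inner_comm (f z) (p (b d)), real_inner_comm (f z) q, real_inner_comm (k z) d,
    real_inner_comm (k z) ub, real_inner_comm z xb]

theorem riccati_stage_identity {a p pt : E →ₗ[ℝ] E} (hp : p.IsSymmetric) {b : F →ₗ[ℝ] E}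
    {k : E →ₗ[ℝ] F} {q qt xb : E} {ub d : F}
    (hgain : (1 + b.adjoint ∘ₗ p ∘ₗ b) ∘ₗ k = -(b.adjoint ∘ₗ p ∘ₗ a))
    (hff : (1 + b.adjoint ∘ₗ p ∘ₗ b) d = ub - b.adjoint q)
    (hpt : pt = 1 + k.adjoint ∘ₗ k + (a + b ∘ₗ k).adjoint ∘ₗ p ∘ₗ (a + b ∘ₗ k))
    (hqt : qt = k.adjoint (d - ub) - xb + (a + b ∘ₗ k).adjoint (p (b d) + q)) (z : E) (w : F) :
    1 / 2 * ‖z - xb‖ ^ 2 + 1 / 2 * ‖w - ub‖ ^ 2 + costToGo p q (a z + b w)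
      = costToGo pt qt z + (1 / 2 * ‖xb‖ ^ 2 + 1 / 2 * ‖d - ub‖ ^ 2 + costToGo p q (b d))
        + controlDeviationCost p b (w - (k z + d)) := by
  have hgrad : k z + d - ub + b.adjoint (p (a z + b (k z + d)) + q) = 0 := by
    have hgain_z := LinearMap.congr_fun hgain z
    simp only [LinearMap.comp_apply, LinearMap.add_apply, Module.End.one_apply,
      LinearMap.neg_apply] at hgain_z hff
    simp only [map_add]
    linear_combination (norm := module) hgain_z + hff
  have hstat : ∀ v, ⟪v, k z + d - ub⟫ + ⟪b v, p (a z + b (k z + d)) + q⟫ = 0 := fun v => by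
    rw [← LinearMap.adjoint_inner_right, ← inner_add_right, hgrad, inner_zero_right]
  rw [add_assoc, half_norm_sq_add_costToGo_of_stationary hp b q (a z) hstat w, hpt, hqt,
    ← costToGo_closedLoop hp]
  ring

end CompletionOfSquares

section Trajectories

variable {n m N : ℕ} {A : Matrix (Fin n) (Fin n) ℝ} {B : Matrix (Fin n) (Fin m) ℝ}
  {xhat : EuclideanSpace ℝ (Fin n)}

theorem lqrCost_eq_of_stage_identity {xbar : ℕ → EuclideanSpace ℝ (Fin n)}
    {ubar : ℕ → EuclideanSpace ℝ (Fin m)} {V : ℕ → EuclideanSpace ℝ (Fin n) → ℝ} {c : ℕ → ℝ}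
    {cN : ℝ} {g : ℕ → EuclideanSpace ℝ (Fin n) → EuclideanSpace ℝ (Fin m) → ℝ}
    (hstage : ∀ t < N, ∀ z w, 1 / 2 * ‖z - xbar t‖ ^ 2 + 1 / 2 * ‖w - ubar t‖ ^ 2
      + V (t + 1) (toEuclideanLin A z + toEuclideanLin B w) = V t z + c t + g t z w)
    (hterm : ∀ z, 1 / 2 * ‖z - xbar N‖ ^ 2 = V N z + cN)
    {x : ℕ → EuclideanSpace ℝ (Fin n)} {u : ℕ → EuclideanSpace ℝ (Fin m)}
    (h : lqrFeasible N A B xhat x u) :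
    lqrCost N xbar ubar x u
      = V 0 xhat + (∑ t ∈ range N, c t + cN) + ∑ t ∈ range N, g t (x t) (u t) := by
  have hstep : ∀ t ∈ range N, 1 / 2 * ‖x t - xbar t‖ ^ 2 + 1 / 2 * ‖u t - ubar t‖ ^ 2
      = (V t (x t) - V (t + 1) (x (t + 1))) + c t + g t (x t) (u t) := fun t ht => by
    have hst := hstage t (mem_range.1 ht) (x t) (u t)
    rw [← h.2 t (mem_range.1 ht)] at hst
    linarith
  rw [lqrCost, sum_congr rfl hstep, sum_add_distrib, sum_add_distrib, sum_range_sub',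
    hterm, h.1]
  ring

theorem lqrFeasible.eq_of_feedback {x x' : ℕ → EuclideanSpace ℝ (Fin n)}
    {u u' : ℕ → EuclideanSpace ℝ (Fin m)} (h : lqrFeasible N A B xhat x u)
    (h' : lqrFeasible N A B xhat x' u')
    {π : ℕ → EuclideanSpace ℝ (Fin n) → EuclideanSpace ℝ (Fin m)}
    (hu : ∀ t < N, u t = π t (x t)) (hu' : ∀ t < N, u' t = π t (x' t)) :
    (∀ t ≤ N, x' t = x t) ∧ ∀ t < N, u' t = u t := by
  have hx : ∀ t ≤ N, x' t = x t := by
    intro t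
    induction t with
    | zero => exact fun _ => h'.1.trans h.1.symm
    | succ t ih =>
      intro ht
      rw [h'.2 t ht, h.2 t ht, hu' t ht, hu t ht, ih (Nat.le_of_succ_le ht)]
  exact ⟨hx, fun t ht => by rw [hu' t ht, hu t ht, hx t ht.le]⟩

theorem lqrFeasible.isUniqueMinimizer_of_stage_identity {xbar : ℕ → EuclideanSpace ℝ (Fin n)}
    {ubar : ℕ → EuclideanSpace ℝ (Fin m)} {V : ℕ → EuclideanSpace ℝ (Fin n) → ℝ} {c : ℕ → ℝ}
    {cN : ℝ} {g : ℕ → EuclideanSpace ℝ (Fin n) → EuclideanSpace ℝ (Fin m) → ℝ}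
    {π : ℕ → EuclideanSpace ℝ (Fin n) → EuclideanSpace ℝ (Fin m)}
    (hstage : ∀ t < N, ∀ z w, 1 / 2 * ‖z - xbar t‖ ^ 2 + 1 / 2 * ‖w - ubar t‖ ^ 2
      + V (t + 1) (toEuclideanLin A z + toEuclideanLin B w) = V t z + c t + g t z w)
    (hterm : ∀ z, 1 / 2 * ‖z - xbar N‖ ^ 2 = V N z + cN)
    (hg : ∀ t < N, ∀ z w, 0 ≤ g t z w) (hg0 : ∀ t < N, ∀ z w, g t z w = 0 ↔ w = π t z)
    {x : ℕ → EuclideanSpace ℝ (Fin n)} {u : ℕ → EuclideanSpace ℝ (Fin m)}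
    (h : lqrFeasible N A B xhat x u) (hu : ∀ t < N, u t = π t (x t)) :
    ∀ x' u', lqrFeasible N A B xhat x' u' →
      lqrCost N xbar ubar x u ≤ lqrCost N xbar ubar x' u' ∧
        (lqrCost N xbar ubar x' u' ≤ lqrCost N xbar ubar x u →
          (∀ t ≤ N, x' t = x t) ∧ ∀ t < N, u' t = u t) := by
  intro x' u' h'
  have hgt : ∀ t ∈ range N, 0 ≤ g t (x' t) (u' t) := fun t ht => hg t (mem_range.1 ht) _ _
  have hopt : ∑ t ∈ range N, g t (x t) (u t) = 0 :=
    sum_eq_zero fun t ht => (hg0 t (mem_range.1 ht) _ _).2 (hu t (mem_range.1 ht))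
  rw [lqrCost_eq_of_stage_identity hstage hterm h, lqrCost_eq_of_stage_identity hstage hterm h',
    hopt, add_zero]
  refine ⟨le_add_of_nonneg_right (sum_nonneg hgt), fun hle => h.eq_of_feedback h' hu ?_⟩
  have hzero := (sum_eq_zero_iff_of_nonneg hgt).1 (le_antisymm (by linarith) (sum_nonneg hgt))
  exact fun t ht => (hg0 t ht _ _).1 (hzero t (mem_range.2 ht))

end Trajectories

lemma toEuclideanLin_one {ι : Type*} [Fintype ι] [DecidableEq ι] :
    toEuclideanLin (1 : Matrix ι ι ℝ) = 1 := by
  ext; simp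

lemma toEuclideanLin_mul {ι κ ν : Type*} [Fintype κ] [DecidableEq κ] [Fintype ν] [DecidableEq ν]
    (M : Matrix ι κ ℝ) (M' : Matrix κ ν ℝ) :
    toEuclideanLin (M * M') = toEuclideanLin M ∘ₗ toEuclideanLin M' := by
  ext; simp

lemma toEuclideanLin_transpose {ι κ : Type*} [Fintype ι] [DecidableEq ι] [Fintype κ]
    [DecidableEq κ] (M : Matrix ι κ ℝ) : toEuclideanLin Mᵀ = (toEuclideanLin M).adjoint := by
  rw [← conjTranspose_eq_transpose_of_trivial, toEuclideanLin_conjTranspose_eq_adjoint]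

section Matrices

variable {ι κ : Type*} [Fintype ι] [Fintype κ]

theorem posSemidef_of_riccati [DecidableEq ι] {N : ℕ} {P : ℕ → Matrix ι ι ℝ}
    {K : ℕ → Matrix κ ι ℝ} {Ab : ℕ → Matrix ι ι ℝ} (hPN : P N = 1)
    (hP : ∀ t < N, P t = 1 + (K t)ᵀ * K t + (Ab t)ᵀ * P (t + 1) * Ab t) {t : ℕ} (ht : t ≤ N) :
    (P t).PosSemidef := by
  induction ht using Nat.decreasingInduction with
  | self => exact hPN ▸ .one
  | of_succ t ht ih =>
    rw [hP t ht]
    exact (PosSemidef.one.add (posSemidef_conjTranspose_mul_self (K t))).add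
      (ih.conjTranspose_mul_mul_same (Ab t))

lemma isUnit_one_add_transpose_mul_mul [DecidableEq κ] {P : Matrix ι ι ℝ} (hP : P.PosSemidef)
    (B : Matrix ι κ ℝ) : IsUnit (1 + Bᵀ * P * B) :=
  (PosDef.one.add_posSemidef (hP.conjTranspose_mul_mul_same B)).isUnit

end Matrices

theorem riccati_stage_identity_matrix {ι κ : Type*} [Fintype ι] [Fintype κ] [DecidableEq ι]
    [DecidableEq κ] {A Ab P P' : Matrix ι ι ℝ} {B : Matrix ι κ ℝ} {Rt : Matrix κ κ ℝ}
    {K : Matrix κ ι ℝ} {q q' xb : EuclideanSpace ℝ ι} {ub d : EuclideanSpace ℝ κ}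
    (hP' : P'.PosSemidef) (hRt : Rt = 1 + Bᵀ * P' * B) (hK : K = -(Rt⁻¹ * Bᵀ * P' * A))
    (hAb : Ab = A + B * K) (hP : P = 1 + Kᵀ * K + Abᵀ * P' * Ab)
    (hd : d = toEuclideanLin Rt⁻¹ (ub - toEuclideanLin Bᵀ q'))
    (hq : q = toEuclideanLin Kᵀ (d - ub) - xb +
      toEuclideanLin Abᵀ (toEuclideanLin (P' * B) d + q'))
    (z : EuclideanSpace ℝ ι) (w : EuclideanSpace ℝ κ) :
    1 / 2 * ‖z - xb‖ ^ 2 + 1 / 2 * ‖w - ub‖ ^ 2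
        + costToGo (toEuclideanLin P') q' (toEuclideanLin A z + toEuclideanLin B w)
      = costToGo (toEuclideanLin P) q z
        + (1 / 2 * ‖xb‖ ^ 2 + 1 / 2 * ‖d - ub‖ ^ 2
          + costToGo (toEuclideanLin P') q' (toEuclideanLin B d))
        + controlDeviationCost (toEuclideanLin P') (toEuclideanLin B)
          (w - (toEuclideanLin K z + d)) := by
  have hR : Rt * Rt⁻¹ = 1 :=
    mul_nonsing_inv _ ((isUnit_iff_isUnit_det _).1 (hRt ▸ isUnit_one_add_transpose_mul_mul hP' B))
  have hgain : Rt * K = -(Bᵀ * P' * A) := by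
    rw [hK, Matrix.mul_neg]
    simp only [← Matrix.mul_assoc, hR, Matrix.one_mul]
  have hff : toEuclideanLin Rt d = ub - toEuclideanLin Bᵀ q' := by
    rw [hd, ← LinearMap.comp_apply, ← toEuclideanLin_mul, hR, toEuclideanLin_one,
      Module.End.one_apply]
  subst hRt hAb hP hq
  refine riccati_stage_identity (isPositive_toEuclideanLin_iff.2 hP').isSymmetric ?_ ?_ ?_ ?_ z w
  · simpa only [map_add, map_neg, toEuclideanLin_mul, toEuclideanLin_transpose,
      toEuclideanLin_one, LinearMap.comp_assoc] using congrArg toEuclideanLin hgain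
  · simpa only [map_add, toEuclideanLin_mul, toEuclideanLin_transpose, toEuclideanLin_one,
      LinearMap.comp_assoc] using hff
  · simp only [map_add, toEuclideanLin_mul, toEuclideanLin_transpose, toEuclideanLin_one,
      LinearMap.comp_assoc]
  · simp only [map_add, toEuclideanLin_mul, toEuclideanLin_transpose, LinearMap.comp_apply]

theorem riccati_projection_correct_general {n m N : ℕ}
    (A : Matrix (Fin n) (Fin n) ℝ) (B : Matrix (Fin n) (Fin m) ℝ)
    (xhat : EuclideanSpace ℝ (Fin n))
    (xbar : ℕ → EuclideanSpace ℝ (Fin n)) (ubar : ℕ → EuclideanSpace ℝ (Fin m))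
    (P : ℕ → Matrix (Fin n) (Fin n) ℝ)
    (Rt : ℕ → Matrix (Fin m) (Fin m) ℝ)
    (K : ℕ → Matrix (Fin m) (Fin n) ℝ)
    (Ab : ℕ → Matrix (Fin n) (Fin n) ℝ)
    (q : ℕ → EuclideanSpace ℝ (Fin n)) (d : ℕ → EuclideanSpace ℝ (Fin m))
    (x : ℕ → EuclideanSpace ℝ (Fin n)) (u : ℕ → EuclideanSpace ℝ (Fin m))
    (hPN : P N = 1)
    (hRt : ∀ t < N, Rt t = 1 + Bᵀ * P (t + 1) * B)
    (hK : ∀ t < N, K t = -((Rt t)⁻¹ * Bᵀ * P (t + 1) * A))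
    (hAb : ∀ t < N, Ab t = A + B * K t)
    (hP : ∀ t < N, P t = 1 + (K t)ᵀ * K t + (Ab t)ᵀ * P (t + 1) * Ab t)
    (hqN : q N = -xbar N)
    (hd : ∀ t < N, d t = toEuclideanLin (Rt t)⁻¹
      (ubar t - toEuclideanLin Bᵀ (q (t + 1))))
    (hq : ∀ t < N, q t = toEuclideanLin (K t)ᵀ (d t - ubar t) - xbar t +
      toEuclideanLin (Ab t)ᵀ (toEuclideanLin (P (t + 1) * B) (d t) + q (t + 1)))
    (hx0 : x 0 = xhat)
    (hu : ∀ t < N, u t = toEuclideanLin (K t) (x t) + d t)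
    (hx : ∀ t < N, x (t + 1) = toEuclideanLin A (x t) + toEuclideanLin B (u t)) :
    lqrFeasible N A B xhat x u ∧
      ∀ x' u', lqrFeasible N A B xhat x' u' →
        lqrCost N xbar ubar x u ≤ lqrCost N xbar ubar x' u' ∧
          (lqrCost N xbar ubar x' u' ≤ lqrCost N xbar ubar x u →
            (∀ t ≤ N, x' t = x t) ∧ ∀ t < N, u' t = u t) := by
  have hPpos : ∀ t < N, (toEuclideanLin (P (t + 1))).IsPositive := fun t ht =>
    isPositive_toEuclideanLin_iff.2 (posSemidef_of_riccati hPN hP ht)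
  have hterm (z : EuclideanSpace ℝ (Fin n)) :
      1 / 2 * ‖z - xbar N‖ ^ 2
        = costToGo (toEuclideanLin (P N)) (q N) z + 1 / 2 * ‖xbar N‖ ^ 2 := by
    rw [hPN, hqN, toEuclideanLin_one]
    exact half_norm_sub_sq_eq_costToGo z (xbar N)
  have hfeas : lqrFeasible N A B xhat x u := ⟨hx0, hx⟩
  refine ⟨hfeas, hfeas.isUniqueMinimizer_of_stage_identity
    (V := fun t => costToGo (toEuclideanLin (P t)) (q t))
    (c := fun t => 1 / 2 * ‖xbar t‖ ^ 2 + 1 / 2 * ‖d t - ubar t‖ ^ 2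
      + costToGo (toEuclideanLin (P (t + 1))) (q (t + 1)) (toEuclideanLin B (d t)))
    (g := fun t z w => controlDeviationCost (toEuclideanLin (P (t + 1))) (toEuclideanLin B)
      (w - (toEuclideanLin (K t) z + d t)))
    (π := fun t z => toEuclideanLin (K t) z + d t)
    (fun t ht => riccati_stage_identity_matrix (posSemidef_of_riccati hPN hP ht) (hRt t ht)
      (hK t ht) (hAb t ht) (hP t ht) (hd t ht) (hq t ht))
    hterm (fun t ht z w => ?_) (fun t ht z w => ?_) hu⟩
  · exact controlDeviationCost_nonneg (hPpos t ht) _ _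
  · rw [controlDeviationCost_eq_zero_iff (hPpos t ht), sub_eq_zero]

/-- Correctness of the Riccati factorization and backward/forward passes
(Algorithms 1 and 2 of the paper, one child per node): the trajectory produced
by the forward pass is the unique minimizer of the squared distance to the
reference trajectory `(x̄, ū)` among all trajectories satisfying the dynamics
`x_{t+1} = A x_t + B u_t` and the initial condition `x_0 = x̂`; i.e. it is the
metric projection of the reference onto the dynamics set `S₁`. -/
theorem riccati_projection_correct {n m N : ℕ} (hN : 1 ≤ N)
    (A : Matrix (Fin n) (Fin n) ℝ) (B : Matrix (Fin n) (Fin m) ℝ)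
    (xhat : EuclideanSpace ℝ (Fin n))
    (xbar : ℕ → EuclideanSpace ℝ (Fin n)) (ubar : ℕ → EuclideanSpace ℝ (Fin m))
    (P : ℕ → Matrix (Fin n) (Fin n) ℝ)
    (Rt : ℕ → Matrix (Fin m) (Fin m) ℝ)
    (K : ℕ → Matrix (Fin m) (Fin n) ℝ)
    (Ab : ℕ → Matrix (Fin n) (Fin n) ℝ)
    (q : ℕ → EuclideanSpace ℝ (Fin n)) (d : ℕ → EuclideanSpace ℝ (Fin m))
    (x : ℕ → EuclideanSpace ℝ (Fin n)) (u : ℕ → EuclideanSpace ℝ (Fin m))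
    (hPN : P N = 1)
    (hRt : ∀ t < N, Rt t = 1 + Bᵀ * P (t + 1) * B)
    (hK : ∀ t < N, K t = -((Rt t)⁻¹ * Bᵀ * P (t + 1) * A))
    (hAb : ∀ t < N, Ab t = A + B * K t)
    (hP : ∀ t < N, P t = 1 + (K t)ᵀ * K t + (Ab t)ᵀ * P (t + 1) * Ab t)
    (hqN : q N = -xbar N)
    (hd : ∀ t < N, d t = toEuclideanLin (Rt t)⁻¹
      (ubar t - toEuclideanLin Bᵀ (q (t + 1))))
    (hq : ∀ t < N, q t = toEuclideanLin (K t)ᵀ (d t - ubar t) - xbar t +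
      toEuclideanLin (Ab t)ᵀ (toEuclideanLin (P (t + 1) * B) (d t) + q (t + 1)))
    (hx0 : x 0 = xhat)
    (hu : ∀ t < N, u t = toEuclideanLin (K t) (x t) + d t)
    (hx : ∀ t < N, x (t + 1) = toEuclideanLin A (x t) + toEuclideanLin B (u t)) :
    lqrFeasible N A B xhat x u ∧
      ∀ x' u', lqrFeasible N A B xhat x' u' →
        lqrCost N xbar ubar x u ≤ lqrCost N xbar ubar x' u' ∧
          (lqrCost N xbar ubar x' u' ≤ lqrCost N xbar ubar x u →
            (∀ t ≤ N, x' t = x t) ∧ ∀ t < N, u' t = u t) :=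
  riccati_projection_correct_general A B xhat xbar ubar P Rt K Ab q d x u hPN hRt hK hAb hP hqN hd
    hq hx0 hu hx
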